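/- Let p be a probability vector in R^n. Then the matrix J = Diag(p) - p p^T satisfies ||J||_{2→2} ≤ 1/2, where ||·||_{2→2} is the spectral norm. -/
import Mathlib

open scoped BigOperators

/-- Schur test for real matrices: if all absolute row sums and column sums are
at most `c`, then `∑ r, (M.mulVec x r)^2 ≤ c^2 * ∑ l, x l ^ 2`. -/
lemma schur_aux {n : ℕ} (M : Matrix (Fin n) (Fin n) ℝ) (c : ℝ) (hc : 0 ≤ c)
    (hrow : ∀ r, ∑ l, |M r l| ≤ c) (hcol : ∀ l, ∑ r, |M r l| ≤ c)
    (x : Fin n → ℝ) :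
    ∑ r, (∑ l, M r l * x l) ^ 2 ≤ c ^ 2 * ∑ l, x l ^ 2 := by
  have key : ∀ r, (∑ l, M r l * x l) ^ 2 ≤ c * ∑ l, |M r l| * x l ^ 2 := by
    intro r
    have h1 : (∑ l, M r l * x l) ^ 2 ≤ (∑ l, |M r l * x l|) ^ 2 := by
      rw [← sq_abs]
      exact pow_le_pow_left₀ (abs_nonneg _) (Finset.abs_sum_le_sum_abs _ _) 2
    have h2 : (∑ l, |M r l * x l|) ^ 2 ≤
        (∑ l, |M r l|) * ∑ l, |M r l| * x l ^ 2 := by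
      refine Finset.sum_sq_le_sum_mul_sum_of_sq_eq_mul _
        (fun i _ => abs_nonneg _) (fun i _ => mul_nonneg (abs_nonneg _) (sq_nonneg _))
        (fun i _ => ?_)
      rw [abs_mul, mul_pow, sq_abs (x i), sq_abs (M r i), ← sq_abs (M r i)]
      ring
    have h3 : (∑ l, |M r l|) * (∑ l, |M r l| * x l ^ 2) ≤
        c * ∑ l, |M r l| * x l ^ 2 := by
      apply mul_le_mul_of_nonneg_right (hrow r)
      exact Finset.sum_nonneg fun i _ => mul_nonneg (abs_nonneg _) (sq_nonneg _)
    exact le_trans h1 (le_trans h2 h3)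
  calc ∑ r, (∑ l, M r l * x l) ^ 2
      ≤ ∑ r, c * ∑ l, |M r l| * x l ^ 2 := Finset.sum_le_sum fun r _ => key r
    _ = c * ∑ l, (∑ r, |M r l|) * x l ^ 2 := by
        rw [← Finset.mul_sum, Finset.sum_comm]
        simp_rw [Finset.sum_mul]
    _ ≤ c * ∑ l, c * x l ^ 2 := by
        apply mul_le_mul_of_nonneg_left _ hc
        exact Finset.sum_le_sum fun l _ =>
          mul_le_mul_of_nonneg_right (hcol l) (sq_nonneg _)
    _ = c ^ 2 * ∑ l, x l ^ 2 := by rw [← Finset.mul_sum]; ring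

/-- Softmax Jacobian spectral norm bound: for a probability vector `p`,
the matrix `J = Diag(p) - p pᵀ` has operator (2→2) norm at most `1/2`. -/
theorem softmax_jacobian_opNorm_le {n : ℕ} (p : Fin n → ℝ)
    (hp_nonneg : ∀ i, 0 ≤ p i) (hp_sum : ∑ i, p i = 1) :
    ‖Matrix.toEuclideanCLM (𝕜 := ℝ)
        (Matrix.diagonal p - Matrix.vecMulVec p p)‖ ≤ 1 / 2 := by
  set J : Matrix (Fin n) (Fin n) ℝ := Matrix.diagonal p - Matrix.vecMulVec p p with hJ
  have hp_le_one : ∀ i, p i ≤ 1 := by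
    intro i
    rw [← hp_sum]
    exact Finset.single_le_sum (fun j _ => hp_nonneg j) (Finset.mem_univ i)
  have habs : ∀ r l, |J r l| = if l = r then p r - p r ^ 2 else p r * p l := by
    intro r l
    by_cases h : l = r
    · subst h
      have hval : J l l = p l - p l ^ 2 := by
        simp only [hJ, Matrix.sub_apply, Matrix.vecMulVec_apply, Matrix.diagonal_apply_eq]
        ring
      rw [hval, if_pos rfl, abs_of_nonneg (by nlinarith [hp_nonneg l, hp_le_one l])]
    · simp only [hJ, Matrix.sub_apply, Matrix.vecMulVec_apply,
        Matrix.diagonal_apply_ne' p h, if_neg h, zero_sub, abs_neg]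
      rw [abs_of_nonneg (mul_nonneg (hp_nonneg r) (hp_nonneg l))]
  have hrowsum : ∀ r, ∑ l, |J r l| ≤ 1 / 2 := by
    intro r
    have herase : ∑ l ∈ Finset.univ.erase r, p l = 1 - p r := by
      rw [Finset.sum_erase_eq_sub (Finset.mem_univ r), hp_sum]
    have hsplit : (∑ l, |J r l|)
        = (p r - p r ^ 2) + ∑ l ∈ Finset.univ.erase r, p r * p l := by
      simp_rw [habs r]
      rw [← Finset.add_sum_erase _ _ (Finset.mem_univ r), if_pos rfl]
      congr 1
      exact Finset.sum_congr rfl fun l hl => if_neg (Finset.ne_of_mem_erase hl)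
    rw [hsplit, ← Finset.mul_sum, herase]
    nlinarith [sq_nonneg (2 * p r - 1)]
  have hsymm : ∀ r l, |J r l| = |J l r| := by
    intro r l
    rw [habs r l, habs l r]
    by_cases h : l = r
    · subst h; simp
    · rw [if_neg h, if_neg (Ne.symm h), mul_comm]
  have hcolsum : ∀ l, ∑ r, |J r l| ≤ 1 / 2 := by
    intro l
    simp_rw [fun r => hsymm r l]
    exact hrowsum l
  refine ContinuousLinearMap.opNorm_le_bound _ (by norm_num) fun x => ?_
  have hTx : ∀ i, (Matrix.toEuclideanCLM (𝕜 := ℝ) J x) i = ∑ l, J i l * x l := by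
    intro i
    have h := Matrix.ofLp_toEuclideanCLM (𝕜 := ℝ) J x
    have : (Matrix.toEuclideanCLM (𝕜 := ℝ) J x) i
        = J.mulVec (WithLp.equiv 2 (Fin n → ℝ) x) i := congrFun h i
    rw [this]
    rfl
  rw [EuclideanSpace.norm_eq, EuclideanSpace.norm_eq]
  have hhalf : (1 / 2 : ℝ) * Real.sqrt (∑ i, ‖x i‖ ^ 2)
      = Real.sqrt ((1 / 2) ^ 2 * ∑ i, ‖x i‖ ^ 2) := by
    rw [Real.sqrt_mul (by positivity), Real.sqrt_sq (by norm_num)]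
  rw [hhalf]
  apply Real.sqrt_le_sqrt
  simp only [hTx, Real.norm_eq_abs, sq_abs]
  exact schur_aux J (1 / 2) (by norm_num) hrowsum hcolsum x
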